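/- arXiv:2007.04689 — 2 statements merged into one kernel-verified Lean document; each statement's English description precedes it below -/
import Mathlib

section
/- For x ∈ R^4 with x_3 ≠ 0, x_4 ≠ 0, x ≠ 0, the derivative X_1 N(x) = (1/(3N(x)²))·((3/2)‖x‖(2x_1 − sgn(x_3)x_2) − sgn(x_4)x_3) satisfies |X_1 N(x)| ≤ 2‖x‖²/N(x)², where N(x) = (‖x‖³+|x_4|)^{1/3} and ‖x‖ = (x_1²+x_2²+|x_3|)^{1/2}. -/
open Real

/-- The quasi-norm `‖x‖ = (x₁² + x₂² + |x₃|)^{1/2}` on the Engel group. -/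
noncomputable def engelPartNorm (x : ℝ × ℝ × ℝ × ℝ) : ℝ :=
  Real.sqrt (x.1 ^ 2 + x.2.1 ^ 2 + |x.2.2.1|)

/-- The homogeneous norm `N(x) = (‖x‖³ + |x₄|)^{1/3}` on the Engel group. -/
noncomputable def engelN (x : ℝ × ℝ × ℝ × ℝ) : ℝ :=
  (engelPartNorm x ^ 3 + |x.2.2.2|) ^ ((1 : ℝ) / 3)

/-- The explicit expression for `X₁N(x)`, where `X₁ = ∂_{x₁} − x₂∂_{x₃} − x₃∂_{x₄}`. -/
noncomputable def X1engelN (x : ℝ × ℝ × ℝ × ℝ) : ℝ :=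
  (1 / (3 * engelN x ^ 2)) *
    ((3 / 2) * engelPartNorm x * (2 * x.1 - Real.sign x.2.2.1 * x.2.1)
      - Real.sign x.2.2.2 * x.2.2.1)

/-! Along the line `t ↦ x + t X₁(x)` the function `N³ = ‖x‖³ + |x₄|` is differentiable at `t = 0`
because `x₃, x₄ ≠ 0`, and the chain rule gives `X₁N = X₁(N³) / (3N²)`. The bound then follows from
`|x₁|, |x₂| ≤ ‖x‖`, `|x₃| ≤ ‖x‖²` and `|sgn| ≤ 1`:
`|X₁(N³)| ≤ (3/2)‖x‖ · 3‖x‖ + ‖x‖² ≤ 6‖x‖²`. -/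

lemma Real.sign_eq_signType_sign (r : ℝ) : Real.sign r = (SignType.sign r : ℝ) := by
  rcases lt_trichotomy r 0 with h | rfl | h
  · simp [Real.sign_of_neg h, h]
  · simp
  · simp [Real.sign_of_pos h, h]

lemma Real.abs_sign_le_one (r : ℝ) : |Real.sign r| ≤ 1 := by
  rcases Real.sign_apply_eq r with h | h | h <;> simp [h]

lemma HasDerivAt.abs_of_ne_zero {f : ℝ → ℝ} {f' x : ℝ} (hf : HasDerivAt f f' x)
    (hx : f x ≠ 0) : HasDerivAt (fun t => |f t|) (Real.sign (f x) * f') x := by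
  rw [Real.sign_eq_signType_sign]
  exact (hasDerivAt_abs hx).comp x hf

lemma HasDerivAt.rpow_one_div_three {f : ℝ → ℝ} {f' x : ℝ} (hf : HasDerivAt f f' x)
    (hx : 0 < f x) :
    HasDerivAt (fun t => f t ^ (1 / 3 : ℝ)) (1 / (3 * (f x ^ (1 / 3 : ℝ)) ^ 2) * f') x := by
  refine (hf.rpow_const (p := 1 / 3) (Or.inl hx.ne')).congr_deriv ?_
  have hcube : (f x ^ (1 / 3 : ℝ)) ^ 3 = f x := by
    simpa using Real.rpow_inv_natCast_pow hx.le three_ne_zero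
  rw [Real.rpow_sub_one hx.ne']
  field_simp
  rw [hcube]

/-- `X₁(N³)(x)`. -/
noncomputable def X1engelNCube (x : ℝ × ℝ × ℝ × ℝ) : ℝ :=
  (3 / 2) * engelPartNorm x * (2 * x.1 - Real.sign x.2.2.1 * x.2.1) - Real.sign x.2.2.2 * x.2.2.1

lemma X1engelN_eq (x : ℝ × ℝ × ℝ × ℝ) : X1engelN x = X1engelNCube x / (3 * engelN x ^ 2) := by
  rw [X1engelN, X1engelNCube, one_div_mul_eq_div]

/-- Not the flow of `X₁`, but it has the same velocity `X₁(x)` at `t = 0`. -/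
def engelX1Line (x : ℝ × ℝ × ℝ × ℝ) (t : ℝ) : ℝ × ℝ × ℝ × ℝ :=
  (x.1 + t, x.2.1, x.2.2.1 - x.2.1 * t, x.2.2.2 - x.2.2.1 * t)

@[simp]
lemma engelX1Line_zero (x : ℝ × ℝ × ℝ × ℝ) : engelX1Line x 0 = x := by
  simp [engelX1Line]

section

variable (x : ℝ × ℝ × ℝ × ℝ)

lemma abs_fst_le_engelPartNorm : |x.1| ≤ engelPartNorm x := by
  rw [← Real.sqrt_sq_eq_abs]
  exact Real.sqrt_le_sqrt (by nlinarith [abs_nonneg x.2.2.1, sq_nonneg x.2.1])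

lemma abs_snd_le_engelPartNorm : |x.2.1| ≤ engelPartNorm x := by
  rw [← Real.sqrt_sq_eq_abs]
  exact Real.sqrt_le_sqrt (by nlinarith [abs_nonneg x.2.2.1, sq_nonneg x.1])

lemma abs_thd_le_engelPartNorm_sq : |x.2.2.1| ≤ engelPartNorm x ^ 2 := by
  rw [engelPartNorm, Real.sq_sqrt (by positivity)]
  nlinarith [sq_nonneg x.1, sq_nonneg x.2.1]

lemma engelPartNorm_pos (h3 : x.2.2.1 ≠ 0) : 0 < engelPartNorm x :=
  Real.sqrt_pos.mpr (by positivity)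

lemma abs_X1engelNCube_le : |X1engelNCube x| ≤ 6 * engelPartNorm x ^ 2 := by
  set A := engelPartNorm x
  have hA : 0 ≤ A := Real.sqrt_nonneg _
  have hinner : |2 * x.1 - Real.sign x.2.2.1 * x.2.1| ≤ 3 * A :=
    calc |2 * x.1 - Real.sign x.2.2.1 * x.2.1|
        ≤ 2 * |x.1| + |Real.sign x.2.2.1| * |x.2.1| := by
          simpa only [abs_mul, abs_two] using abs_sub (2 * x.1) (Real.sign x.2.2.1 * x.2.1)
      _ ≤ 2 * A + 1 * A := by
          gcongr
          exacts [abs_fst_le_engelPartNorm x, Real.abs_sign_le_one _, abs_snd_le_engelPartNorm x]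
      _ = 3 * A := by ring
  have hlast : |Real.sign x.2.2.2 * x.2.2.1| ≤ A ^ 2 :=
    calc |Real.sign x.2.2.2 * x.2.2.1| = |Real.sign x.2.2.2| * |x.2.2.1| := abs_mul _ _
      _ ≤ 1 * A ^ 2 := by
          gcongr
          exacts [Real.abs_sign_le_one _, abs_thd_le_engelPartNorm_sq x]
      _ = A ^ 2 := one_mul _
  calc |X1engelNCube x|
      ≤ |3 / 2 * A * (2 * x.1 - Real.sign x.2.2.1 * x.2.1)| + |Real.sign x.2.2.2 * x.2.2.1| :=
        abs_sub _ _
    _ = 3 / 2 * A * |2 * x.1 - Real.sign x.2.2.1 * x.2.1| + |Real.sign x.2.2.2 * x.2.2.1| := by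
        rw [abs_mul, abs_of_nonneg (by positivity : (0 : ℝ) ≤ 3 / 2 * A)]
    _ ≤ 3 / 2 * A * (3 * A) + A ^ 2 := by gcongr
    _ ≤ 6 * A ^ 2 := by nlinarith [sq_nonneg A]

lemma hasDerivAt_engelPartNorm_engelX1Line (h3 : x.2.2.1 ≠ 0) :
    HasDerivAt (fun t => engelPartNorm (engelX1Line x t))
      ((2 * x.1 - Real.sign x.2.2.1 * x.2.1) / (2 * engelPartNorm x)) 0 := by
  have hsq : HasDerivAt (fun t : ℝ => (x.1 + t) ^ 2) (2 * x.1) 0 := by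
    simpa using ((hasDerivAt_id (0 : ℝ)).const_add x.1).fun_pow 2
  have habs : HasDerivAt (fun t => |x.2.2.1 - x.2.1 * t|) (Real.sign x.2.2.1 * -x.2.1) 0 := by
    simpa using (((hasDerivAt_id (0 : ℝ)).const_mul x.2.1).const_sub x.2.2.1).abs_of_ne_zero
      (by simpa using h3)
  have hpos : 0 < x.1 ^ 2 + x.2.1 ^ 2 + |x.2.2.1| := by positivity
  refine (((hsq.add_const (x.2.1 ^ 2)).fun_add habs).sqrt (by simpa using hpos.ne')).congr_deriv ?_
  simp only [engelPartNorm, add_zero, mul_zero, sub_zero]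
  ring

lemma hasDerivAt_engelNCube_engelX1Line (h3 : x.2.2.1 ≠ 0) (h4 : x.2.2.2 ≠ 0) :
    HasDerivAt (fun t => engelPartNorm (engelX1Line x t) ^ 3 + |(engelX1Line x t).2.2.2|)
      (X1engelNCube x) 0 := by
  have hA := engelPartNorm_pos x h3
  have habs : HasDerivAt (fun t => |x.2.2.2 - x.2.2.1 * t|) (Real.sign x.2.2.2 * -x.2.2.1) 0 := by
    simpa using (((hasDerivAt_id (0 : ℝ)).const_mul x.2.2.1).const_sub x.2.2.2).abs_of_ne_zero
      (by simpa using h4)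
  refine (((hasDerivAt_engelPartNorm_engelX1Line x h3).fun_pow 3).fun_add habs).congr_deriv ?_
  simp only [engelX1Line_zero, X1engelNCube]
  field_simp
  ring

end

theorem X1_engelN_bound_general (x : ℝ × ℝ × ℝ × ℝ) (h3 : x.2.2.1 ≠ 0) (h4 : x.2.2.2 ≠ 0) :
    HasDerivAt (fun t : ℝ =>
        engelN (x.1 + t, x.2.1, x.2.2.1 - x.2.1 * t, x.2.2.2 - x.2.2.1 * t))
      (X1engelN x) 0 ∧
    |X1engelN x| ≤ 2 * engelPartNorm x ^ 2 / engelN x ^ 2 := by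
  have hA := engelPartNorm_pos x h3
  refine ⟨?_, ?_⟩
  · have h := (hasDerivAt_engelNCube_engelX1Line x h3 h4).rpow_one_div_three
      (by rw [engelX1Line_zero]; positivity)
    rw [engelX1Line_zero] at h
    exact h
  · have hN : 0 < engelN x := Real.rpow_pos_of_pos (by positivity) _
    calc |X1engelN x| = |X1engelNCube x| / (3 * engelN x ^ 2) := by
          rw [X1engelN_eq, abs_div, abs_of_pos (by positivity : (0 : ℝ) < 3 * engelN x ^ 2)]
      _ ≤ 6 * engelPartNorm x ^ 2 / (3 * engelN x ^ 2) := by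
          gcongr; exact abs_X1engelNCube_le x
      _ = 2 * engelPartNorm x ^ 2 / engelN x ^ 2 := by field_simp; ring

/-- `|X₁N(x)| ≤ 2‖x‖²/N(x)²` for `x₃ ≠ 0`, `x₄ ≠ 0`, `x ≠ 0`. -/
theorem X1_engelN_bound (x : ℝ × ℝ × ℝ × ℝ) (h3 : x.2.2.1 ≠ 0) (h4 : x.2.2.2 ≠ 0)
    (hx : x ≠ 0) :
    HasDerivAt (fun t : ℝ =>
        engelN (x.1 + t, x.2.1, x.2.2.1 - x.2.1 * t, x.2.2.2 - x.2.2.1 * t))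
      (X1engelN x) 0 ∧
    |X1engelN x| ≤ 2 * engelPartNorm x ^ 2 / engelN x ^ 2 :=
  X1_engelN_bound_general x h3 h4
end

section
/- For x ∈ R^4 with x_3 ≠ 0, x_4 ≠ 0, x ≠ 0, the subgradient ∇N(x) = (X_1N(x), X_2N(x)) satisfies |∇N(x)|² = (X_1N(x))² + (X_2N(x))² ≤ 5‖x‖⁴/N(x)⁴, where N(x) = (‖x‖³+|x_4|)^{1/3}, ‖x‖ = (x_1²+x_2²+|x_3|)^{1/2}, X_1 = ∂_{x_1} − x_2∂_{x_3} − x_3∂_{x_4}, X_2 = ∂_{x_2}. -/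
open Real

/-- `X₂N(x)`, where `X₂ = ∂_{x₂}`. -/
noncomputable def X2engelN (x : ℝ × ℝ × ℝ × ℝ) : ℝ :=
  engelPartNorm x * x.2.1 / engelN x ^ 2

/-!
Both components of `∇N` are `‖x‖`-weighted polynomials divided by `N²`, so the claim reduces
to the algebraic inequality `(3/2 ‖x‖ (2x₁ - s x₂) - t x₃)² + 9 ‖x‖² x₂² ≤ 45 ‖x‖⁴` for signs
`s, t ∈ [-1, 1]`. Splitting the square with `(p - q)² ≤ 2p² + 2q²` and using
`(2x₁ - s x₂)² ≤ 8x₁² + 2x₂²`, `x₁² + x₂² ≤ ‖x‖²` and `x₃² ≤ ‖x‖⁴` gives even `38 ‖x‖⁴`.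
-/

theorem Real.sign_sq_le_one (r : ℝ) : Real.sign r ^ 2 ≤ 1 := by
  rcases Real.sign_apply_eq r with h | h | h <;> rw [h] <;> norm_num

lemma engelPartNorm_sq (x : ℝ × ℝ × ℝ × ℝ) :
    engelPartNorm x ^ 2 = x.1 ^ 2 + x.2.1 ^ 2 + |x.2.2.1| :=
  Real.sq_sqrt (by positivity)

lemma sq_add_sq_le_engelPartNorm_sq (x : ℝ × ℝ × ℝ × ℝ) :
    x.1 ^ 2 + x.2.1 ^ 2 ≤ engelPartNorm x ^ 2 := by
  rw [engelPartNorm_sq]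
  linarith [abs_nonneg x.2.2.1]

lemma sq_third_le_engelPartNorm_pow_four (x : ℝ × ℝ × ℝ × ℝ) :
    x.2.2.1 ^ 2 ≤ engelPartNorm x ^ 4 := by
  have h : |x.2.2.1| ≤ engelPartNorm x ^ 2 := by
    rw [engelPartNorm_sq]
    linarith [sq_nonneg x.1, sq_nonneg x.2.1]
  calc x.2.2.1 ^ 2 = |x.2.2.1| ^ 2 := (sq_abs _).symm
    _ ≤ (engelPartNorm x ^ 2) ^ 2 := pow_le_pow_left₀ (abs_nonneg _) h 2
    _ = engelPartNorm x ^ 4 := by ring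

lemma engel_gradient_numerator_le {a b c s t r : ℝ} (hs : s ^ 2 ≤ 1) (ht : t ^ 2 ≤ 1)
    (hab : a ^ 2 + b ^ 2 ≤ r ^ 2) (hc : c ^ 2 ≤ r ^ 4) :
    ((3 / 2) * r * (2 * a - s * b) - t * c) ^ 2 + 9 * (r * b) ^ 2 ≤ 45 * r ^ 4 := by
  have hsplit : ((3 / 2) * r * (2 * a - s * b) - t * c) ^ 2
      ≤ 2 * ((3 / 2) * r * (2 * a - s * b)) ^ 2 + 2 * (t * c) ^ 2 := by
    nlinarith [sq_nonneg ((3 / 2) * r * (2 * a - s * b) + t * c)]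
  have hu : (2 * a - s * b) ^ 2 ≤ 8 * a ^ 2 + 2 * b ^ 2 := by
    nlinarith [sq_nonneg (2 * a + s * b), mul_le_mul_of_nonneg_right hs (sq_nonneg b)]
  have htc : (t * c) ^ 2 ≤ r ^ 4 := by
    rw [mul_pow]
    linarith [mul_le_mul_of_nonneg_right ht (sq_nonneg c)]
  have hr : r ^ 2 * (9 / 2 * (2 * a - s * b) ^ 2 + 9 * b ^ 2) ≤ r ^ 2 * (36 * r ^ 2) :=
    mul_le_mul_of_nonneg_left (by linarith [sq_nonneg b]) (sq_nonneg r)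
  linarith [pow_nonneg (sq_nonneg r) 2]

lemma X1engelN_sq_add_X2engelN_sq (x : ℝ × ℝ × ℝ × ℝ) :
    X1engelN x ^ 2 + X2engelN x ^ 2 =
      (((3 / 2) * engelPartNorm x * (2 * x.1 - Real.sign x.2.2.1 * x.2.1)
        - Real.sign x.2.2.2 * x.2.2.1) ^ 2 + 9 * (engelPartNorm x * x.2.1) ^ 2)
        / (9 * engelN x ^ 4) := by
  rw [X1engelN, X2engelN]
  ring

theorem gradN_sq_bound_general (x : ℝ × ℝ × ℝ × ℝ) :
    X1engelN x ^ 2 + X2engelN x ^ 2 ≤ 5 * engelPartNorm x ^ 4 / engelN x ^ 4 := by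
  have hnum := engel_gradient_numerator_le (Real.sign_sq_le_one x.2.2.1)
    (Real.sign_sq_le_one x.2.2.2) (sq_add_sq_le_engelPartNorm_sq x)
    (sq_third_le_engelPartNorm_pow_four x)
  rw [X1engelN_sq_add_X2engelN_sq,
    show 5 * engelPartNorm x ^ 4 / engelN x ^ 4 = 45 * engelPartNorm x ^ 4 / (9 * engelN x ^ 4)
      by ring]
  exact div_le_div_of_nonneg_right hnum (by positivity)

/-- The sub-gradient bound `|∇N(x)|² ≤ 5‖x‖⁴/N(x)⁴`. -/
theorem gradN_sq_bound (x : ℝ × ℝ × ℝ × ℝ) (h3 : x.2.2.1 ≠ 0) (h4 : x.2.2.2 ≠ 0)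
    (hx : x ≠ 0) :
    X1engelN x ^ 2 + X2engelN x ^ 2 ≤ 5 * engelPartNorm x ^ 4 / engelN x ^ 4 :=
  gradN_sq_bound_general x
end
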